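/- arXiv:2603.27210 — 6 statements merged into one kernel-verified Lean document; each statement's English description precedes it below -/
import Mathlib

section
/- Let Ω ⊆ ℝ² be open and let λ : ℝ² → ℂ be differentiable on Ω with Im λ > 0 on Ω. Set α := |λ|² (= λ·conj λ) and β := −2·Re λ, so that λ² + βλ + α = 0. Then the following are equivalent: (i) λ_x + λ·λ_y = 0 on Ω; (ii) for every pair of functions U, V : ℝ² → ℝ differentiable on Ω, the function f := U + V·λ satisfies f_x + λ·f_y = (U_x − α·V_y) + λ·(V_x + U_y − β·V_y) at every point of Ω. -/
open Complex

noncomputable def pdx (f : ℝ × ℝ → ℂ) (p : ℝ × ℝ) : ℂ := fderiv ℝ f p (1, 0)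
noncomputable def pdy (f : ℝ × ℝ → ℂ) (p : ℝ × ℝ) : ℂ := fderiv ℝ f p (0, 1)
noncomputable def pdxR (f : ℝ × ℝ → ℝ) (p : ℝ × ℝ) : ℝ := fderiv ℝ f p (1, 0)
noncomputable def pdyR (f : ℝ × ℝ → ℝ) (p : ℝ × ℝ) : ℝ := fderiv ℝ f p (0, 1)

/-! The derivative of `f = U + V λ` along any direction is `U' + V' λ + V λ'`. Along `(1,0)` plus
`λ` times along `(0,1)`, the term `V (λ_x + λ λ_y)` splits off, and `λ² = -βλ - α` rewrites the
remaining `λ² V_y` in the basis `1, λ`. So `f_x + λ f_y` exceeds the right-hand side of (ii) by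
exactly `V (λ_x + λ λ_y)`: this vanishes for all `V` under (i), and `U = 0, V = 1` recovers (i)
from (ii). -/

theorem Complex.sq_add_neg_two_re_mul_add_normSq (z : ℂ) :
    z ^ 2 + ((-2 * z.re : ℝ) : ℂ) * z + (normSq z : ℂ) = 0 := by
  apply Complex.ext <;> simp [sq, normSq_apply] <;> ring

theorem fderiv_ofReal_add_ofReal_mul_apply {E : Type*} [NormedAddCommGroup E] [NormedSpace ℝ E]
    {U V : E → ℝ} {lam : E → ℂ} {p : E} (hU : DifferentiableAt ℝ U p)
    (hV : DifferentiableAt ℝ V p) (hlam : DifferentiableAt ℝ lam p) (v : E) :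
    fderiv ℝ (fun q => (U q : ℂ) + (V q : ℂ) * lam q) p v
      = (fderiv ℝ U p v : ℂ) + (fderiv ℝ V p v : ℂ) * lam p + (V p : ℂ) * fderiv ℝ lam p v := by
  have hUc : HasFDerivAt (fun q => (U q : ℂ)) (ofRealCLM.comp (fderiv ℝ U p)) p :=
    ofRealCLM.hasFDerivAt.comp p hU.hasFDerivAt
  have hVc : HasFDerivAt (fun q => (V q : ℂ)) (ofRealCLM.comp (fderiv ℝ V p)) p :=
    ofRealCLM.hasFDerivAt.comp p hV.hasFDerivAt
  have hf : HasFDerivAt (fun q => (U q : ℂ) + (V q : ℂ) * lam q) _ p :=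
    hUc.add (hVc.mul hlam.hasFDerivAt)
  rw [hf.fderiv]
  simp only [add_apply, smul_apply, ContinuousLinearMap.comp_apply, ofRealCLM_apply, smul_eq_mul]
  ring

theorem pdx_add_mul_pdy_ofReal_add_ofReal_mul {U V : ℝ × ℝ → ℝ} {lam : ℝ × ℝ → ℂ} {p : ℝ × ℝ}
    (hU : DifferentiableAt ℝ U p) (hV : DifferentiableAt ℝ V p)
    (hlam : DifferentiableAt ℝ lam p) :
    pdx (fun q => (U q : ℂ) + (V q : ℂ) * lam q) p
        + lam p * pdy (fun q => (U q : ℂ) + (V q : ℂ) * lam q) p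
      = ((pdxR U p - normSq (lam p) * pdyR V p : ℝ) : ℂ)
        + lam p * ((pdxR V p + pdyR U p - (-2 * (lam p).re) * pdyR V p : ℝ) : ℂ)
        + (V p : ℂ) * (pdx lam p + lam p * pdy lam p) := by
  have hquad := sq_add_neg_two_re_mul_add_normSq (lam p)
  simp only [pdx, pdy, pdxR, pdyR, fderiv_ofReal_add_ofReal_mul_apply hU hV hlam]
  push_cast at hquad ⊢
  linear_combination (fderiv ℝ V p (0, 1) : ℂ) * hquad

theorem stmt2_general
    (Ω : Set (ℝ × ℝ))
    (lam : ℝ × ℝ → ℂ)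
    (hlam : ∀ p ∈ Ω, DifferentiableAt ℝ lam p) :
    (∀ p ∈ Ω, pdx lam p + lam p * pdy lam p = 0) ↔
    (∀ U V : ℝ × ℝ → ℝ,
      (∀ p ∈ Ω, DifferentiableAt ℝ U p) →
      (∀ p ∈ Ω, DifferentiableAt ℝ V p) →
      ∀ p ∈ Ω,
        pdx (fun q => (U q : ℂ) + (V q : ℂ) * lam q) p
          + lam p * pdy (fun q => (U q : ℂ) + (V q : ℂ) * lam q) p
        = ((pdxR U p - Complex.normSq (lam p) * pdyR V p : ℝ) : ℂ)
          + lam p * ((pdxR V p + pdyR U p - (-2 * (lam p).re) * pdyR V p : ℝ) : ℂ)) := by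
  constructor
  · intro hrigid U V hU hV p hp
    rw [pdx_add_mul_pdy_ofReal_add_ofReal_mul (hU p hp) (hV p hp) (hlam p hp), hrigid p hp,
      mul_zero, add_zero]
  · intro htransport p hp
    have h := htransport (fun _ => 0) (fun _ => 1) (fun _ _ => differentiableAt_const 0)
      (fun _ _ => differentiableAt_const 1) p hp
    rw [pdx_add_mul_pdy_ofReal_add_ofReal_mul (differentiableAt_const 0)
      (differentiableAt_const 1) (hlam p hp)] at h
    simpa using h

/-- Rigidity is equivalent to homogeneity of the transported Cauchy–Riemann system.
Here `α := |λ|²` and `β := −2 Re λ`, so that `λ² + βλ + α = 0` automatically. -/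
theorem stmt2
    (Ω : Set (ℝ × ℝ)) (hΩ : IsOpen Ω)
    (lam : ℝ × ℝ → ℂ)
    (hlam : ∀ p ∈ Ω, DifferentiableAt ℝ lam p)
    (him : ∀ p ∈ Ω, 0 < (lam p).im) :
    (∀ p ∈ Ω, pdx lam p + lam p * pdy lam p = 0) ↔
    (∀ U V : ℝ × ℝ → ℝ,
      (∀ p ∈ Ω, DifferentiableAt ℝ U p) →
      (∀ p ∈ Ω, DifferentiableAt ℝ V p) →
      ∀ p ∈ Ω,
        pdx (fun q => (U q : ℂ) + (V q : ℂ) * lam q) p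
          + lam p * pdy (fun q => (U q : ℂ) + (V q : ℂ) * lam q) p
        = ((pdxR U p - Complex.normSq (lam p) * pdyR V p : ℝ) : ℂ)
          + lam p * ((pdxR V p + pdyR U p - (-2 * (lam p).re) * pdyR V p : ℝ) : ℂ)) :=
  stmt2_general Ω lam hlam
end

section
/- Let Ω ⊆ ℝ² be open, let α, β : ℝ² → ℝ be differentiable on Ω with 4α − β² > 0, and let λ : ℝ² → ℂ be differentiable on Ω with λ² + βλ + α = 0 and Im λ > 0 on Ω. Let G₀, G₁ : ℝ² → ℝ be functions satisfying G₀ + G₁·λ = λ_x + λ·λ_y on Ω. For pairs of real functions define the pointwise product (U,V) * (S,T) := (U·S − α·V·T, U·T + V·S − β·V·T) and the operator D(U,V) := (U_x − α·V_y + V·G₀, V_x + U_y − β·V_y + V·G₁). Then for all pairs W = (U,V) and Z = (S,T) of functions ℝ² → ℝ differentiable on Ω, the Leibniz rule D(W * Z) = (DW) * Z + W * (DZ) holds at every point of Ω. -/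
open Complex

/-- Pointwise product in the fiber algebra `A_z = ℝ[X]/(X² + β(z)X + α(z))`,
on pairs `(U, V)` representing `U + V·X`. -/
def fprod (α β : ℝ × ℝ → ℝ) (W Z : (ℝ × ℝ → ℝ) × (ℝ × ℝ → ℝ)) :
    (ℝ × ℝ → ℝ) × (ℝ × ℝ → ℝ) :=
  (fun p => W.1 p * Z.1 p - α p * W.2 p * Z.2 p,
   fun p => W.1 p * Z.2 p + W.2 p * Z.1 p - β p * W.2 p * Z.2 p)

/-- The operator `D`, modelling twice the algebra-level Cauchy–Riemann operator. -/
noncomputable def Dop (α β G₀ G₁ : ℝ × ℝ → ℝ) (W : (ℝ × ℝ → ℝ) × (ℝ × ℝ → ℝ)) :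
    (ℝ × ℝ → ℝ) × (ℝ × ℝ → ℝ) :=
  (fun p => pdxR W.1 p - α p * pdyR W.2 p + W.2 p * G₀ p,
   fun p => pdxR W.2 p + pdyR W.1 p - β p * pdyR W.2 p + W.2 p * G₁ p)

/-!
Expanding `D(W * Z)` by the product rule, everything cancels against `(DW) * Z + W * (DZ)` except
`V·T` times `A = α_x − α β_y + β G₀ − 2α G₁` in the first component and
`B = β_x + α_y − β β_y + 2G₀ − β G₁` in the second. Differentiating `λ² + βλ + α = 0` in `x` and
`y` and substituting `λ_x + λ λ_y = G₀ + G₁ λ` gives `A + B λ = 0`; since `A`, `B` are real and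
`Im λ ≠ 0`, both vanish.
-/

theorem Complex.eq_zero_of_ofReal_add_ofReal_mul_eq_zero {a b : ℝ} {z : ℂ} (hz : z.im ≠ 0)
    (h : (a : ℂ) + b * z = 0) : a = 0 ∧ b = 0 := by
  have hb : b = 0 := by simpa [hz] using congrArg Complex.im h
  subst hb
  simpa using h

section Differentiation

variable {E : Type*} [NormedAddCommGroup E] [NormedSpace ℝ E]

theorem fderiv_apply_of_eventually_sq_add_mul_add_eq_zero {α β : E → ℝ} {lam : E → ℂ} {p : E}
    (hα : DifferentiableAt ℝ α p) (hβ : DifferentiableAt ℝ β p) (hlam : DifferentiableAt ℝ lam p)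
    (hquad : ∀ᶠ q in nhds p, lam q ^ 2 + (β q : ℂ) * lam q + (α q : ℂ) = 0) (v : E) :
    (2 * lam p + β p) * fderiv ℝ lam p v + lam p * (fderiv ℝ β p v : ℂ)
      + (fderiv ℝ α p v : ℂ) = 0 := by
  have hα' := ((ofRealCLM : ℝ →L[ℝ] ℂ).hasFDerivAt (x := α p)).comp p hα.hasFDerivAt
  have hβ' := ((ofRealCLM : ℝ →L[ℝ] ℂ).hasFDerivAt (x := β p)).comp p hβ.hasFDerivAt
  have hF := ((hlam.hasFDerivAt.pow 2).add (hβ'.mul hlam.hasFDerivAt)).add hα'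
  have hF0 := (hasFDerivAt_const (𝕜 := ℝ) (0 : ℂ) p).congr_of_eventuallyEq hquad
  have := congrArg (fun L : E →L[ℝ] ℂ => L v) (hF.unique hF0)
  simp only [Nat.add_one_sub_one, pow_one, nsmul_eq_mul, Nat.cast_ofNat, Function.comp_apply,
    ofRealCLM_apply, add_apply, smul_apply, smul_eq_mul, ContinuousLinearMap.comp_apply,
    zero_apply] at this
  linear_combination this

end Differentiation

section Leibniz

variable {α β G₀ G₁ : ℝ × ℝ → ℝ} {W Z : (ℝ × ℝ → ℝ) × (ℝ × ℝ → ℝ)} {p : ℝ × ℝ}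

theorem fderiv_fprod_fst_apply (hα : DifferentiableAt ℝ α p)
    (hW₁ : DifferentiableAt ℝ W.1 p) (hW₂ : DifferentiableAt ℝ W.2 p)
    (hZ₁ : DifferentiableAt ℝ Z.1 p) (hZ₂ : DifferentiableAt ℝ Z.2 p) (v : ℝ × ℝ) :
    fderiv ℝ (fprod α β W Z).1 p v
      = fderiv ℝ W.1 p v * Z.1 p + W.1 p * fderiv ℝ Z.1 p v
        - (fderiv ℝ α p v * W.2 p * Z.2 p + α p * fderiv ℝ W.2 p v * Z.2 p
          + α p * W.2 p * fderiv ℝ Z.2 p v) := by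
  have h := (hW₁.hasFDerivAt.fun_mul hZ₁.hasFDerivAt).fun_sub
    ((hα.hasFDerivAt.fun_mul hW₂.hasFDerivAt).fun_mul hZ₂.hasFDerivAt)
  rw [fprod, h.fderiv]
  simp only [smul_add, sub_apply, add_apply, smul_apply, smul_eq_mul]
  ring

theorem fderiv_fprod_snd_apply (hβ : DifferentiableAt ℝ β p)
    (hW₁ : DifferentiableAt ℝ W.1 p) (hW₂ : DifferentiableAt ℝ W.2 p)
    (hZ₁ : DifferentiableAt ℝ Z.1 p) (hZ₂ : DifferentiableAt ℝ Z.2 p) (v : ℝ × ℝ) :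
    fderiv ℝ (fprod α β W Z).2 p v
      = fderiv ℝ W.1 p v * Z.2 p + W.1 p * fderiv ℝ Z.2 p v
        + fderiv ℝ W.2 p v * Z.1 p + W.2 p * fderiv ℝ Z.1 p v
        - (fderiv ℝ β p v * W.2 p * Z.2 p + β p * fderiv ℝ W.2 p v * Z.2 p
          + β p * W.2 p * fderiv ℝ Z.2 p v) := by
  have h := ((hW₁.hasFDerivAt.fun_mul hZ₂.hasFDerivAt).fun_add
    (hW₂.hasFDerivAt.fun_mul hZ₁.hasFDerivAt)).fun_sub
    ((hβ.hasFDerivAt.fun_mul hW₂.hasFDerivAt).fun_mul hZ₂.hasFDerivAt)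
  rw [fprod, h.fderiv]
  simp only [smul_add, sub_apply, add_apply, smul_apply, smul_eq_mul]
  ring

theorem Dop_fprod_fst (hα : DifferentiableAt ℝ α p) (hβ : DifferentiableAt ℝ β p)
    (hW₁ : DifferentiableAt ℝ W.1 p) (hW₂ : DifferentiableAt ℝ W.2 p)
    (hZ₁ : DifferentiableAt ℝ Z.1 p) (hZ₂ : DifferentiableAt ℝ Z.2 p) :
    (Dop α β G₀ G₁ (fprod α β W Z)).1 p
      = (fprod α β (Dop α β G₀ G₁ W) Z).1 p + (fprod α β W (Dop α β G₀ G₁ Z)).1 p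
        - W.2 p * Z.2 p * (pdxR α p - α p * pdyR β p + β p * G₀ p - 2 * α p * G₁ p) := by
  simp only [Dop, pdxR, pdyR, fderiv_fprod_fst_apply hα hW₁ hW₂ hZ₁ hZ₂,
    fderiv_fprod_snd_apply hβ hW₁ hW₂ hZ₁ hZ₂]
  simp only [fprod]
  ring

theorem Dop_fprod_snd (hα : DifferentiableAt ℝ α p) (hβ : DifferentiableAt ℝ β p)
    (hW₁ : DifferentiableAt ℝ W.1 p) (hW₂ : DifferentiableAt ℝ W.2 p)
    (hZ₁ : DifferentiableAt ℝ Z.1 p) (hZ₂ : DifferentiableAt ℝ Z.2 p) :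
    (Dop α β G₀ G₁ (fprod α β W Z)).2 p
      = (fprod α β (Dop α β G₀ G₁ W) Z).2 p + (fprod α β W (Dop α β G₀ G₁ Z)).2 p
        - W.2 p * Z.2 p * (pdxR β p + pdyR α p - β p * pdyR β p + 2 * G₀ p - β p * G₁ p) := by
  simp only [Dop, pdxR, pdyR, fderiv_fprod_fst_apply hα hW₁ hW₂ hZ₁ hZ₂,
    fderiv_fprod_snd_apply hβ hW₁ hW₂ hZ₁ hZ₂]
  simp only [fprod]
  ring

end Leibniz

theorem leibniz_defects_eq_zero {α β G₀ G₁ : ℝ × ℝ → ℝ} {lam : ℝ × ℝ → ℂ} {p : ℝ × ℝ}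
    (hα : DifferentiableAt ℝ α p) (hβ : DifferentiableAt ℝ β p) (hlam : DifferentiableAt ℝ lam p)
    (hquad : ∀ᶠ q in nhds p, lam q ^ 2 + (β q : ℂ) * lam q + (α q : ℂ) = 0)
    (him : (lam p).im ≠ 0)
    (hG : (G₀ p : ℂ) + (G₁ p : ℂ) * lam p = pdx lam p + lam p * pdy lam p) :
    pdxR α p - α p * pdyR β p + β p * G₀ p - 2 * α p * G₁ p = 0 ∧
      pdxR β p + pdyR α p - β p * pdyR β p + 2 * G₀ p - β p * G₁ p = 0 := by
  have hx := fderiv_apply_of_eventually_sq_add_mul_add_eq_zero hα hβ hlam hquad (1, 0)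
  have hy := fderiv_apply_of_eventually_sq_add_mul_add_eq_zero hα hβ hlam hquad (0, 1)
  apply Complex.eq_zero_of_ofReal_add_ofReal_mul_eq_zero him
  rw [pdx, pdy] at hG
  simp only [pdxR, pdyR]
  push_cast
  linear_combination hx + lam p * hy + (2 * lam p + β p) * hG
    - (2 * G₁ p + (fderiv ℝ β p (0, 1) : ℂ)) * hquad.self_of_nhds

theorem stmt3_general
    (Ω : Set (ℝ × ℝ)) (hΩ : IsOpen Ω)
    (α β : ℝ × ℝ → ℝ) (lam : ℝ × ℝ → ℂ) (G₀ G₁ : ℝ × ℝ → ℝ)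
    (hα : ∀ p ∈ Ω, DifferentiableAt ℝ α p)
    (hβ : ∀ p ∈ Ω, DifferentiableAt ℝ β p)
    (hlam : ∀ p ∈ Ω, DifferentiableAt ℝ lam p)
    (hquad : ∀ p ∈ Ω, (lam p) ^ 2 + (β p : ℂ) * lam p + (α p : ℂ) = 0)
    (him : ∀ p ∈ Ω, 0 < (lam p).im)
    (hG : ∀ p ∈ Ω, (G₀ p : ℂ) + (G₁ p : ℂ) * lam p = pdx lam p + lam p * pdy lam p)
    (W Z : (ℝ × ℝ → ℝ) × (ℝ × ℝ → ℝ))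
    (hW1 : ∀ p ∈ Ω, DifferentiableAt ℝ W.1 p) (hW2 : ∀ p ∈ Ω, DifferentiableAt ℝ W.2 p)
    (hZ1 : ∀ p ∈ Ω, DifferentiableAt ℝ Z.1 p) (hZ2 : ∀ p ∈ Ω, DifferentiableAt ℝ Z.2 p) :
    ∀ p ∈ Ω,
      (Dop α β G₀ G₁ (fprod α β W Z)).1 p
        = (fprod α β (Dop α β G₀ G₁ W) Z).1 p + (fprod α β W (Dop α β G₀ G₁ Z)).1 p ∧
      (Dop α β G₀ G₁ (fprod α β W Z)).2 p
        = (fprod α β (Dop α β G₀ G₁ W) Z).2 p + (fprod α β W (Dop α β G₀ G₁ Z)).2 p := by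
  intro p hp
  have hquad_near : ∀ᶠ q in nhds p, lam q ^ 2 + (β q : ℂ) * lam q + (α q : ℂ) = 0 :=
    Filter.eventually_of_mem (hΩ.mem_nhds hp) hquad
  obtain ⟨hA, hB⟩ := leibniz_defects_eq_zero (hα p hp) (hβ p hp) (hlam p hp) hquad_near
    (him p hp).ne' (hG p hp)
  constructor
  · rw [Dop_fprod_fst (hα p hp) (hβ p hp) (hW1 p hp) (hW2 p hp) (hZ1 p hp) (hZ2 p hp), hA,
      mul_zero, sub_zero]
  · rw [Dop_fprod_snd (hα p hp) (hβ p hp) (hW1 p hp) (hW2 p hp) (hZ1 p hp) (hZ2 p hp), hB,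
      mul_zero, sub_zero]

/-- Leibniz rule for the algebra-level Cauchy–Riemann operator, without any
rigidity assumption. -/
theorem stmt3
    (Ω : Set (ℝ × ℝ)) (hΩ : IsOpen Ω)
    (α β : ℝ × ℝ → ℝ) (lam : ℝ × ℝ → ℂ) (G₀ G₁ : ℝ × ℝ → ℝ)
    (hα : ∀ p ∈ Ω, DifferentiableAt ℝ α p)
    (hβ : ∀ p ∈ Ω, DifferentiableAt ℝ β p)
    (hlam : ∀ p ∈ Ω, DifferentiableAt ℝ lam p)
    (hell : ∀ p ∈ Ω, 4 * α p - (β p) ^ 2 > 0)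
    (hquad : ∀ p ∈ Ω, (lam p) ^ 2 + (β p : ℂ) * lam p + (α p : ℂ) = 0)
    (him : ∀ p ∈ Ω, 0 < (lam p).im)
    (hG : ∀ p ∈ Ω, (G₀ p : ℂ) + (G₁ p : ℂ) * lam p = pdx lam p + lam p * pdy lam p)
    (W Z : (ℝ × ℝ → ℝ) × (ℝ × ℝ → ℝ))
    (hW1 : ∀ p ∈ Ω, DifferentiableAt ℝ W.1 p) (hW2 : ∀ p ∈ Ω, DifferentiableAt ℝ W.2 p)
    (hZ1 : ∀ p ∈ Ω, DifferentiableAt ℝ Z.1 p) (hZ2 : ∀ p ∈ Ω, DifferentiableAt ℝ Z.2 p) :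
    ∀ p ∈ Ω,
      (Dop α β G₀ G₁ (fprod α β W Z)).1 p
        = (fprod α β (Dop α β G₀ G₁ W) Z).1 p + (fprod α β W (Dop α β G₀ G₁ Z)).1 p ∧
      (Dop α β G₀ G₁ (fprod α β W Z)).2 p
        = (fprod α β (Dop α β G₀ G₁ W) Z).2 p + (fprod α β W (Dop α β G₀ G₁ Z)).2 p :=
  stmt3_general Ω hΩ α β lam G₀ G₁ hα hβ hlam hquad him hG W Z hW1 hW2 hZ1 hZ2
end

section
/- Let Ω ⊆ ℝ² be open and let λ : ℝ² → ℂ be differentiable on Ω with Im λ > 0 on Ω. Define μ := −(1 + iλ)/(1 − iλ) on Ω (well-defined since 1 − iλ ≠ 0 when Im λ > 0). Then μ is differentiable on Ω and at every point of Ω one has μ_{z̄} − μ·μ_z = (−2i/(1 − iλ)³)·(λ_x + λ·λ_y). In particular, λ satisfies the inviscid Burgers equation λ_x + λ·λ_y = 0 on Ω if and only if μ satisfies the self-dilatation equation μ_{z̄} = μ·μ_z on Ω. -/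
open Complex

/-- Wirtinger derivative `g_z := (g_x − i g_y)/2`. -/
noncomputable def wdz (f : ℝ × ℝ → ℂ) (p : ℝ × ℝ) : ℂ := (pdx f p - I * pdy f p) / 2
/-- Wirtinger derivative `g_{z̄} := (g_x + i g_y)/2`. -/
noncomputable def wdzbar (f : ℝ × ℝ → ℂ) (p : ℝ × ℝ) : ℂ := (pdx f p + I * pdy f p) / 2

/-! The Cayley transform `μ = cayley ∘ λ` is a holomorphic function of `λ`, so by the chain rule
`μ_x = c λ_x` and `μ_y = c λ_y` with `c = cayley'(λ) = -2i/(1 - iλ)²`. Substituting into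
`μ_{z̄} - μ μ_z` gives `c/2 · ((1 - μ) λ_x + i(1 + μ) λ_y)`, and `1 - μ = 2/(1 - iλ)`,
`i(1 + μ) = 2λ/(1 - iλ)` turn this into `-2i/(1 - iλ)³ · (λ_x + λ λ_y)`. The coefficient never
vanishes, whence the equivalence of the two equations. -/

noncomputable def cayley (z : ℂ) : ℂ := -(1 + I * z) / (1 - I * z)

lemma one_sub_I_mul_ne_zero {z : ℂ} (hz : z ≠ -I) : 1 - I * z ≠ 0 := fun h =>
  hz <| by linear_combination I * h + z * I_sq

lemma hasDerivAt_cayley {z : ℂ} (hz : 1 - I * z ≠ 0) :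
    HasDerivAt cayley (-2 * I / (1 - I * z) ^ 2) z := by
  have hnum : HasDerivAt (fun w : ℂ => -(1 + I * w)) (-I) z := by
    exact (((hasDerivAt_id z).const_mul I).const_add 1).neg.congr_deriv (by simp)
  have hden : HasDerivAt (fun w : ℂ => 1 - I * w) (-I) z := by
    simpa using ((hasDerivAt_id z).const_mul I).const_sub 1
  refine (hnum.div hden hz).congr_deriv ?_
  rw [div_left_inj' (pow_ne_zero 2 hz)]
  ring

lemma HasFDerivAt.cayley {E : Type*} [NormedAddCommGroup E] [NormedSpace ℝ E]
    {f : E → ℂ} {f' : E →L[ℝ] ℂ} {p : E} (hf : HasFDerivAt f f' p) (hd : 1 - I * f p ≠ 0) :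
    HasFDerivAt (fun q => cayley (f q)) ((-2 * I / (1 - I * f p) ^ 2) • f') p := by
  refine (((hasDerivAt_cayley hd).hasFDerivAt.restrictScalars ℝ).comp p hf).congr_fderiv ?_
  ext v
  simp [mul_comm]

lemma wdzbar_sub_mul_wdz_of_hasFDerivAt {f g : ℝ × ℝ → ℂ} {p : ℝ × ℝ} {c : ℂ}
    (h : HasFDerivAt f (c • fderiv ℝ g p) p) (m : ℂ) :
    wdzbar f p - m * wdz f p = c / 2 * ((1 - m) * pdx g p + I * (1 + m) * pdy g p) := by
  simp only [wdzbar, wdz, pdx, pdy, h.fderiv, smul_apply, smul_eq_mul]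
  ring

lemma cayley_dilatation_identity {z : ℂ} (hz : 1 - I * z ≠ 0) (x y : ℂ) :
    -2 * I / (1 - I * z) ^ 2 / 2 * ((1 - cayley z) * x + I * (1 + cayley z) * y)
      = -2 * I / (1 - I * z) ^ 3 * (x + z * y) := by
  unfold cayley
  field_simp
  linear_combination (2 * z * y) * I_sq

/-- Self-dilatation: the Burgers equation for `λ` is equivalent to
`μ_{z̄} = μ·μ_z` for the Cayley transform `μ = −(1+iλ)/(1−iλ)`. -/
theorem stmt6
    (Ω : Set (ℝ × ℝ)) (hΩ : IsOpen Ω)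
    (lam : ℝ × ℝ → ℂ)
    (hlam : ∀ p ∈ Ω, DifferentiableAt ℝ lam p)
    (him : ∀ p ∈ Ω, 0 < (lam p).im)
    (μ : ℝ × ℝ → ℂ)
    (hμ : ∀ p ∈ Ω, μ p = -(1 + I * lam p) / (1 - I * lam p)) :
    (∀ p ∈ Ω, DifferentiableAt ℝ μ p) ∧
    (∀ p ∈ Ω,
      wdzbar μ p - μ p * wdz μ p
        = (-2 * I / (1 - I * lam p) ^ 3) * (pdx lam p + lam p * pdy lam p)) ∧
    ((∀ p ∈ Ω, pdx lam p + lam p * pdy lam p = 0) ↔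
      (∀ p ∈ Ω, wdzbar μ p = μ p * wdz μ p)) := by
  have hd : ∀ p ∈ Ω, 1 - I * lam p ≠ 0 := fun p hp =>
    one_sub_I_mul_ne_zero fun h => by linarith [show (lam p).im = -1 by simp [h], him p hp]
  have hμ_fderiv : ∀ p ∈ Ω,
      HasFDerivAt μ ((-2 * I / (1 - I * lam p) ^ 2) • fderiv ℝ lam p) p := fun p hp =>
    ((hlam p hp).hasFDerivAt.cayley (hd p hp)).congr_of_eventuallyEq <|
      Filter.eventually_of_mem (hΩ.mem_nhds hp) hμ
  have hid : ∀ p ∈ Ω, wdzbar μ p - μ p * wdz μ p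
      = (-2 * I / (1 - I * lam p) ^ 3) * (pdx lam p + lam p * pdy lam p) := fun p hp => by
    rw [wdzbar_sub_mul_wdz_of_hasFDerivAt (hμ_fderiv p hp), hμ p hp]
    exact cayley_dilatation_identity (hd p hp) _ _
  refine ⟨fun p hp => (hμ_fderiv p hp).differentiableAt, hid, forall₂_congr fun p hp => ?_⟩
  have hcoeff : -2 * I / (1 - I * lam p) ^ 3 ≠ 0 :=
    div_ne_zero (by simp) (pow_ne_zero _ (hd p hp))
  rw [← sub_eq_zero (a := wdzbar μ p), hid p hp, mul_eq_zero, or_iff_right hcoeff]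
end

section
/- Let U ⊆ ℂ be open and h : ℂ → ℂ be complex-differentiable on U. Let Ω ⊆ ℝ² be open and let λ : ℝ² → ℂ be differentiable on Ω with Im λ > 0 on Ω, such that for every (x,y) ∈ Ω the point w₀ := y − λ(x,y)·x lies in U and λ(x,y) = h(w₀). Set J(x,y) := 1 + h'(w₀)·x and assume J ≠ 0 on Ω. Then at every point of Ω: (i) λ_y = h'(w₀)/J and λ_x = −λ·h'(w₀)/J, so that λ_x + λ·λ_y = 0 (λ is rigid); (ii) Φ = 2i·(Im λ)/conj(J); in particular Φ ≠ 0 on Ω. -/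
open Complex

/-- The characteristic Jacobian. -/
noncomputable def Phi (lam : ℝ × ℝ → ℂ) (p : ℝ × ℝ) : ℂ :=
  (lam p - (starRingEnd ℂ) (lam p))
    - (p.1 : ℂ) * ((starRingEnd ℂ) (pdx lam p) + lam p * (starRingEnd ℂ) (pdy lam p))

/-!
Differentiating `λ = h(y − λx)` along a direction `v` gives
`λ_v = h'(w₀) (v₂ − λ v₁ − x λ_v)`, which solves to `λ_v = h'(w₀) (v₂ − λ v₁) / J`.
Rigidity follows at once, and for a rigid structure
`Φ = (λ − conj λ)(1 − x conj λ_y)`; with `λ_y = h'(w₀)/J` the second factor is `1 / conj J`.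
-/

open Filter Topology ContinuousLinearMap

theorem hasFDerivAt_snd_sub_mul_fst {lam : ℝ × ℝ → ℂ} {L : ℝ × ℝ →L[ℝ] ℂ} {p : ℝ × ℝ}
    (hlam : HasFDerivAt lam L p) :
    HasFDerivAt (fun q : ℝ × ℝ => (q.2 : ℂ) - lam q * q.1)
      (ofRealCLM.comp (snd ℝ ℝ ℝ) - (lam p • ofRealCLM.comp (fst ℝ ℝ ℝ) + (p.1 : ℂ) • L)) p :=
  (ofRealCLM.comp (snd ℝ ℝ ℝ)).hasFDerivAt.sub (hlam.mul (ofRealCLM.comp (fst ℝ ℝ ℝ)).hasFDerivAt)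

theorem fderiv_apply_eq_of_eventuallyEq_comp {lam : ℝ × ℝ → ℂ} {h : ℂ → ℂ} {p : ℝ × ℝ}
    (hlam : DifferentiableAt ℝ lam p) (hh : DifferentiableAt ℂ h ((p.2 : ℂ) - lam p * p.1))
    (hfix : ∀ᶠ q in 𝓝 p, lam q = h ((q.2 : ℂ) - lam q * q.1)) (v : ℝ × ℝ) :
    fderiv ℝ lam p v =
      deriv h ((p.2 : ℂ) - lam p * p.1) * (v.2 - (lam p * v.1 + p.1 * fderiv ℝ lam p v)) := by
  have hcomp := (hh.hasDerivAt.hasFDerivAt.restrictScalars ℝ).comp p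
    (hasFDerivAt_snd_sub_mul_fst hlam.hasFDerivAt)
  conv_lhs => rw [(hcomp.congr_of_eventuallyEq hfix).fderiv]
  simp only [comp_sub, comp_add, sub_apply, comp_apply, coe_snd', ofRealCLM_apply,
    coe_restrictScalars', toSpanSingleton_apply, smul_eq_mul, add_apply, smul_apply, coe_fst']
  ring

theorem fderiv_apply_eq_div {lam : ℝ × ℝ → ℂ} {h : ℂ → ℂ} {p : ℝ × ℝ}
    (hlam : DifferentiableAt ℝ lam p) (hh : DifferentiableAt ℂ h ((p.2 : ℂ) - lam p * p.1))
    (hfix : ∀ᶠ q in 𝓝 p, lam q = h ((q.2 : ℂ) - lam q * q.1))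
    (hJ : 1 + deriv h ((p.2 : ℂ) - lam p * p.1) * p.1 ≠ 0) (v : ℝ × ℝ) :
    fderiv ℝ lam p v = deriv h ((p.2 : ℂ) - lam p * p.1) * (v.2 - lam p * v.1)
      / (1 + deriv h ((p.2 : ℂ) - lam p * p.1) * p.1) := by
  rw [eq_div_iff hJ]
  linear_combination fderiv_apply_eq_of_eventuallyEq_comp hlam hh hfix v

theorem Phi_eq_of_rigid {lam : ℝ × ℝ → ℂ} {p : ℝ × ℝ}
    (hrigid : pdx lam p + lam p * pdy lam p = 0) :
    Phi lam p = (lam p - starRingEnd ℂ (lam p)) * (1 - p.1 * starRingEnd ℂ (pdy lam p)) := by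
  rw [Phi, eq_neg_of_add_eq_zero_left hrigid]
  simp only [map_neg, map_mul]
  ring

theorem stmt11_general
    (U : Set ℂ) (h : ℂ → ℂ)
    (hh : ∀ w ∈ U, DifferentiableAt ℂ h w)
    (Ω : Set (ℝ × ℝ)) (hΩ : IsOpen Ω)
    (lam : ℝ × ℝ → ℂ)
    (hlam : ∀ p ∈ Ω, DifferentiableAt ℝ lam p)
    (him : ∀ p ∈ Ω, 0 < (lam p).im)
    (hw : ∀ p ∈ Ω, (p.2 : ℂ) - lam p * (p.1 : ℂ) ∈ U)
    (hfix : ∀ p ∈ Ω, lam p = h ((p.2 : ℂ) - lam p * (p.1 : ℂ)))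
    (hJ : ∀ p ∈ Ω, (1 : ℂ) + deriv h ((p.2 : ℂ) - lam p * (p.1 : ℂ)) * (p.1 : ℂ) ≠ 0) :
    ∀ p ∈ Ω,
      pdy lam p = deriv h ((p.2 : ℂ) - lam p * (p.1 : ℂ))
          / (1 + deriv h ((p.2 : ℂ) - lam p * (p.1 : ℂ)) * (p.1 : ℂ)) ∧
      pdx lam p = -lam p * deriv h ((p.2 : ℂ) - lam p * (p.1 : ℂ))
          / (1 + deriv h ((p.2 : ℂ) - lam p * (p.1 : ℂ)) * (p.1 : ℂ)) ∧
      pdx lam p + lam p * pdy lam p = 0 ∧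
      Phi lam p = 2 * I * ((lam p).im : ℂ)
          / (starRingEnd ℂ) (1 + deriv h ((p.2 : ℂ) - lam p * (p.1 : ℂ)) * (p.1 : ℂ)) ∧
      Phi lam p ≠ 0 := by
  intro p hp
  have hJp := hJ p hp
  have hderiv := fderiv_apply_eq_div (hlam p hp) (hh _ (hw p hp))
    (eventually_of_mem (hΩ.mem_nhds hp) hfix) hJp
  set d := deriv h ((p.2 : ℂ) - lam p * p.1)
  have hy : pdy lam p = d / (1 + d * p.1) := by
    rw [pdy, hderiv]; push_cast; ring
  have hx : pdx lam p = -lam p * d / (1 + d * p.1) := by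
    rw [pdx, hderiv]; push_cast; ring
  have hrigid : pdx lam p + lam p * pdy lam p = 0 := by rw [hx, hy]; ring
  have hJc : starRingEnd ℂ (1 + d * p.1) ≠ 0 := (map_ne_zero _).2 hJp
  have hPhi : Phi lam p = 2 * I * ((lam p).im : ℂ) / starRingEnd ℂ (1 + d * p.1) := by
    rw [Phi_eq_of_rigid hrigid, hy, sub_conj, map_div₀]
    simp only [map_add, map_mul, map_one, conj_ofReal, mul_comm _ (p.1 : ℂ)] at hJc ⊢
    field_simp
    push_cast
    ring
  refine ⟨hy, hx, hrigid, hPhi, hPhi ▸ div_ne_zero ?_ hJc⟩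
  simp [Complex.ext_iff, (him p hp).ne']

/-- On the Burgers domain of a holomorphic seed `h`, the structure
`λ = h(y − λx)` is rigid and `Φ = 2i·Im λ / conj J ≠ 0`. -/
theorem stmt11
    (U : Set ℂ) (hU : IsOpen U) (h : ℂ → ℂ)
    (hh : ∀ w ∈ U, DifferentiableAt ℂ h w)
    (Ω : Set (ℝ × ℝ)) (hΩ : IsOpen Ω)
    (lam : ℝ × ℝ → ℂ)
    (hlam : ∀ p ∈ Ω, DifferentiableAt ℝ lam p)
    (him : ∀ p ∈ Ω, 0 < (lam p).im)
    (hw : ∀ p ∈ Ω, (p.2 : ℂ) - lam p * (p.1 : ℂ) ∈ U)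
    (hfix : ∀ p ∈ Ω, lam p = h ((p.2 : ℂ) - lam p * (p.1 : ℂ)))
    (hJ : ∀ p ∈ Ω, (1 : ℂ) + deriv h ((p.2 : ℂ) - lam p * (p.1 : ℂ)) * (p.1 : ℂ) ≠ 0) :
    ∀ p ∈ Ω,
      pdy lam p = deriv h ((p.2 : ℂ) - lam p * (p.1 : ℂ))
          / (1 + deriv h ((p.2 : ℂ) - lam p * (p.1 : ℂ)) * (p.1 : ℂ)) ∧
      pdx lam p = -lam p * deriv h ((p.2 : ℂ) - lam p * (p.1 : ℂ))
          / (1 + deriv h ((p.2 : ℂ) - lam p * (p.1 : ℂ)) * (p.1 : ℂ)) ∧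
      pdx lam p + lam p * pdy lam p = 0 ∧
      Phi lam p = 2 * I * ((lam p).im : ℂ)
          / (starRingEnd ℂ) (1 + deriv h ((p.2 : ℂ) - lam p * (p.1 : ℂ)) * (p.1 : ℂ)) ∧
      Phi lam p ≠ 0 :=
  stmt11_general U h hh Ω hΩ lam hlam him hw hfix hJ
end

section
/- Let Ω ⊆ ℝ² be open and let λ : ℝ² → ℂ be differentiable on Ω with Im λ > 0 and λ_x + λ·λ_y = 0 on Ω. Define the real functions p(x,y) := y − x·Re λ(x,y) and q(x,y) := −x·Im λ(x,y) on Ω. Then at every point of Ω the real Jacobian determinant satisfies (p_x·q_y − p_y·q_x : ℝ), regarded as a complex number, equal to −(i/2)·(1 − x·λ_y)·Φ; moreover p_x·q_y − p_y·q_x ≠ 0 if and only if Φ ≠ 0. -/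
open Complex

/-- Jacobian of the real coordinate map `(x,y) ↦ (p,q) = (Re ξ, Im ξ)` of a
rigid structure: `det = −(i/2)(1 − xλ_y)Φ`, nonzero iff `Φ ≠ 0`. -/
theorem stmt12
    (Ω : Set (ℝ × ℝ)) (hΩ : IsOpen Ω)
    (lam : ℝ × ℝ → ℂ)
    (hlam : ∀ p ∈ Ω, DifferentiableAt ℝ lam p)
    (him : ∀ p ∈ Ω, 0 < (lam p).im)
    (hrigid : ∀ p ∈ Ω, pdx lam p + lam p * pdy lam p = 0)
    (P Q : ℝ × ℝ → ℝ)
    (hP : ∀ q : ℝ × ℝ, P q = q.2 - q.1 * (lam q).re)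
    (hQ : ∀ q : ℝ × ℝ, Q q = -q.1 * (lam q).im) :
    ∀ p ∈ Ω,
      ((pdxR P p * pdyR Q p - pdyR P p * pdxR Q p : ℝ) : ℂ)
        = -(I / 2) * (1 - (p.1 : ℂ) * pdy lam p) * Phi lam p ∧
      (pdxR P p * pdyR Q p - pdyR P p * pdxR Q p ≠ 0 ↔ Phi lam p ≠ 0) := by
  intro p hp
  have hd : DifferentiableAt ℝ lam p := hlam p hp
  set A := fderiv ℝ lam p with hAdef
  have hAt : HasFDerivAt lam A p := hd.hasFDerivAt
  set a := lam p with ha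
  set Ax := A (1, 0) with hAxdef
  set Ay := A (0, 1) with hAydef
  have hre : HasFDerivAt (fun q : ℝ × ℝ => (lam q).re) (Complex.reCLM.comp A) p :=
    (Complex.reCLM.hasFDerivAt).comp p hAt
  have him' : HasFDerivAt (fun q : ℝ × ℝ => (lam q).im) (Complex.imCLM.comp A) p :=
    (Complex.imCLM.hasFDerivAt).comp p hAt
  have hPd : HasFDerivAt P
      (ContinuousLinearMap.snd ℝ ℝ ℝ -
        (p.1 • (Complex.reCLM.comp A) + a.re • ContinuousLinearMap.fst ℝ ℝ ℝ)) p := by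
    have hPe : P = fun q : ℝ × ℝ => q.2 - q.1 * (lam q).re := funext hP
    rw [hPe]
    exact hasFDerivAt_snd.sub (hasFDerivAt_fst.mul hre)
  have hQd : HasFDerivAt Q
      (-(p.1 • (Complex.imCLM.comp A) + a.im • ContinuousLinearMap.fst ℝ ℝ ℝ)) p := by
    have hQe : Q = fun q : ℝ × ℝ => -(q.1 * (lam q).im) := by
      funext q; rw [hQ q]; ring
    rw [hQe]
    exact (hasFDerivAt_fst.mul him').neg
  have ePx : pdxR P p = -a.re - p.1 * Ax.re := by
    rw [pdxR, hPd.fderiv]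
    simp [hAxdef]
    ring
  have ePy : pdyR P p = 1 - p.1 * Ay.re := by
    rw [pdyR, hPd.fderiv]
    simp [hAydef]
  have eQx : pdxR Q p = -a.im - p.1 * Ax.im := by
    rw [pdxR, hQd.fderiv]
    simp [hAxdef]
    ring
  have eQy : pdyR Q p = -(p.1 * Ay.im) := by
    rw [pdyR, hQd.fderiv]
    simp [hAydef]
  have hpdx : pdx lam p = Ax := rfl
  have hpdy : pdy lam p = Ay := rfl
  have hr : Ax + a * Ay = 0 := by
    have := hrigid p hp
    rwa [hpdx, hpdy] at this
  have hAx : Ax = -(a * Ay) := by linear_combination hr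
  set z : ℂ := 1 - (p.1 : ℂ) * Ay with hz
  have hdet : pdxR P p * pdyR Q p - pdyR P p * pdxR Q p = a.im * Complex.normSq z := by
    rw [ePx, ePy, eQx, eQy, hAx, hz]
    simp [Complex.normSq_apply, Complex.mul_re, Complex.mul_im, Complex.sub_re,
      Complex.sub_im, Complex.ofReal_re, Complex.ofReal_im, Complex.one_re, Complex.one_im]
    ring
  have hconj : (starRingEnd ℂ) z = 1 - (p.1 : ℂ) * (starRingEnd ℂ) Ay := by
    rw [hz]; simp [map_sub, map_mul, Complex.conj_ofReal]
  have hPhi : Phi lam p = (a - (starRingEnd ℂ) a) * (starRingEnd ℂ) z := by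
    rw [Phi, hpdx, hpdy, hAx, hconj, ← ha]
    rw [map_neg, map_mul]
    ring
  have hai : 0 < a.im := him p hp
  constructor
  · rw [hdet, hPhi, hpdy, Complex.sub_conj]
    push_cast
    rw [← Complex.mul_conj]
    linear_combination ((a.im : ℂ) * z * (starRingEnd ℂ) z) * Complex.I_sq
  · rw [hdet, hPhi]
    have h1 : a - (starRingEnd ℂ) a ≠ 0 := by
      rw [Complex.sub_conj]
      simp [hai.ne', Complex.ext_iff, Complex.I_ne_zero]
    rw [not_iff_not]
    simp [mul_eq_zero, hai.ne', Complex.normSq_eq_zero, h1, map_eq_zero]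
end

section
/- Let Ω ⊆ ℝ² be open and let λ : ℝ² → ℂ be continuously differentiable on Ω with Im λ > 0 and λ_x + λ·λ_y = 0 on Ω. Let z₀ ∈ Ω be a point where Φ(z₀) ≠ 0. Then there exists an open set V with z₀ ∈ V ⊆ Ω such that: for every function f : ℝ² → ℂ continuously differentiable on V, one has f_x + λ·f_y = 0 at every point of V if and only if there exists a function g : ℂ → ℂ that is complex-differentiable on the image ξ(V) (an open subset of ℂ) with f(x,y) = g(ξ(x,y)) for all (x,y) ∈ V. -/
/-!
Rigidity `λ_x + λ λ_y = 0` makes the canonical coordinate a solution itself, `ξ_x + λ ξ_y = 0`,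
and turns the characteristic Jacobian into `Φ = (λ - λ̄) · conj ξ_y`. A real-linear map
`ℝ² → ℂ` killed by `∂_x + λ ∂_y` is `v ↦ (v₂ - λ v₁) · c` for a complex constant `c`, which is
bijective when `Im λ ≠ 0` and `c ≠ 0`. Hence `Φ(z₀) ≠ 0` makes `dξ(z₀)` invertible, and the
inverse function theorem makes `ξ` a chart near `z₀`. At each point the differential of a
solution `f` is then a complex multiple of `dξ`, so `f ∘ ξ⁻¹` satisfies Cauchy–Riemann;
conversely `g ∘ ξ` is a solution by the chain rule.
-/

open Complex

/-- The canonical coordinate `ξ(x,y) = y − λ(x,y)·x`. -/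
noncomputable def xiC (lam : ℝ × ℝ → ℂ) (p : ℝ × ℝ) : ℂ := (p.2 : ℂ) - lam p * (p.1 : ℂ)

theorem ContDiffOn.exists_openPartialHomeomorph_isInvertible_fderiv
    {𝕂 E F : Type*} [RCLike 𝕂] [NormedAddCommGroup E] [NormedSpace 𝕂 E] [CompleteSpace E]
    [NormedAddCommGroup F] [NormedSpace 𝕂 F] {f : E → F} {U : Set E} {a : E}
    (hU : IsOpen U) (hf : ContDiffOn 𝕂 1 f U) (ha : a ∈ U)
    (hinv : (fderiv 𝕂 f a).IsInvertible) :
    ∃ φ : OpenPartialHomeomorph E F, ⇑φ = f ∧ a ∈ φ.source ∧ φ.source ⊆ U ∧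
      ∀ p ∈ φ.source, (fderiv 𝕂 f p).IsInvertible := by
  obtain ⟨f', hf'⟩ := hinv
  have hfa : ContDiffAt 𝕂 1 f a := hf.contDiffAt (hU.mem_nhds ha)
  have hf'a : HasFDerivAt f (f' : E →L[𝕂] F) a :=
    hf' ▸ (hfa.differentiableAt one_ne_zero).hasFDerivAt
  have hW : IsOpen (U ∩ fderiv 𝕂 f ⁻¹' {L | L.IsInvertible}) :=
    (hf.continuousOn_fderiv_of_isOpen hU le_rfl).isOpen_inter_preimage hU
      ContinuousLinearEquiv.isOpen
  exact ⟨(hfa.toOpenPartialHomeomorph f hf'a one_ne_zero).restrOpen _ hW, rfl,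
    ⟨hfa.mem_toOpenPartialHomeomorph_source hf'a one_ne_zero, ha, f', hf'⟩,
    fun p hp => hp.2.1, fun p hp => hp.2.2⟩

section CharacteristicLinearMaps

variable {A E : ℝ × ℝ →L[ℝ] ℂ} {μ : ℂ}

theorem apply_eq_of_apply_add_mul_apply_eq_zero (hA : A (1, 0) + μ * A (0, 1) = 0)
    (v : ℝ × ℝ) : A v = (v.2 - μ * v.1) * A (0, 1) := by
  have hv : v = v.1 • ((1 : ℝ), (0 : ℝ)) + v.2 • ((0 : ℝ), (1 : ℝ)) := by simp
  conv_lhs => rw [hv, map_add, map_smul, map_smul, eq_neg_of_add_eq_zero_left hA]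
  simp only [real_smul]
  ring

theorem eq_smul_of_apply_add_mul_apply_eq_zero (hA : A (1, 0) + μ * A (0, 1) = 0)
    (hE : E (1, 0) + μ * E (0, 1) = 0) (hE₀ : E (0, 1) ≠ 0) :
    A = (A (0, 1) / E (0, 1)) • E := by
  refine ContinuousLinearMap.ext fun v => ?_
  rw [smul_apply, smul_eq_mul, apply_eq_of_apply_add_mul_apply_eq_zero hA v,
    apply_eq_of_apply_add_mul_apply_eq_zero hE v]
  field_simp

theorem injective_of_apply_add_mul_apply_eq_zero (hE : E (1, 0) + μ * E (0, 1) = 0)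
    (hE₀ : E (0, 1) ≠ 0) (hμ : μ.im ≠ 0) : Function.Injective E := by
  refine (injective_iff_map_eq_zero E).2 fun v hv => ?_
  rw [apply_eq_of_apply_add_mul_apply_eq_zero hE, mul_eq_zero, or_iff_left hE₀] at hv
  have hre := congrArg re hv
  have him := congrArg im hv
  simp only [sub_re, sub_im, ofReal_re, ofReal_im, mul_re, mul_im, zero_re, zero_im] at hre him
  have h₁ : v.1 = 0 := (mul_eq_zero.1 (show μ.im * v.1 = 0 by linarith)).resolve_left hμ
  ext <;> simp_all

theorem isInvertible_of_apply_add_mul_apply_eq_zero (hE : E (1, 0) + μ * E (0, 1) = 0)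
    (hE₀ : E (0, 1) ≠ 0) (hμ : μ.im ≠ 0) : E.IsInvertible := by
  have hdim : Module.finrank ℝ (ℝ × ℝ) = Module.finrank ℝ ℂ := by
    simp [Module.finrank_prod, finrank_real_complex]
  exact ⟨(LinearMap.linearEquivOfInjective E.toLinearMap
    (injective_of_apply_add_mul_apply_eq_zero hE hE₀ hμ) hdim).toContinuousLinearEquiv, rfl⟩

end CharacteristicLinearMaps

theorem pdx_add_mul_pdy_comp {g : ℂ → ℂ} {ξ : ℝ × ℝ → ℂ} {p : ℝ × ℝ}
    (hg : DifferentiableAt ℂ g (ξ p)) (hξ : DifferentiableAt ℝ ξ p) (μ : ℂ) :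
    pdx (g ∘ ξ) p + μ * pdy (g ∘ ξ) p = deriv g (ξ p) * (pdx ξ p + μ * pdy ξ p) := by
  have h := (hg.hasDerivAt.comp_hasFDerivAt p hξ.hasFDerivAt).fderiv
  simp only [pdx, pdy, h, smul_apply, smul_eq_mul]
  ring

theorem differentiableAt_comp_of_pdx_add_mul_pdy_eq_zero {f : ℝ × ℝ → ℂ} {ψ : ℂ → ℝ × ℝ}
    {q : ℂ} {e : (ℝ × ℝ) ≃L[ℝ] ℂ} {μ : ℂ} (hψ : HasFDerivAt ψ (e.symm : ℂ →L[ℝ] ℝ × ℝ) q)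
    (hf : DifferentiableAt ℝ f (ψ q)) (hfμ : pdx f (ψ q) + μ * pdy f (ψ q) = 0)
    (he : e (1, 0) + μ * e (0, 1) = 0) : DifferentiableAt ℂ (f ∘ ψ) q := by
  have he₀ : e (0, 1) ≠ 0 := fun h => by simpa using e.injective (h.trans e.map_zero.symm)
  have hA := eq_smul_of_apply_add_mul_apply_eq_zero (E := (e : ℝ × ℝ →L[ℝ] ℂ)) hfμ he he₀
  refine (hasFDerivAt_of_restrictScalars ℝ (hf.hasFDerivAt.comp q hψ)
    (f' := (pdy f (ψ q) / e (0, 1)) • ContinuousLinearMap.id ℂ ℂ) ?_).differentiableAt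
  rw [hA]
  ext1 w
  simp [pdy]

theorem OpenPartialHomeomorph.pdx_add_mul_pdy_eq_zero_iff_exists_comp
    {φ : OpenPartialHomeomorph (ℝ × ℝ) ℂ} {μ : ℝ × ℝ → ℂ} {f : ℝ × ℝ → ℂ}
    (hφ : DifferentiableOn ℝ φ φ.source) (hφinv : ∀ p ∈ φ.source, (fderiv ℝ φ p).IsInvertible)
    (hφμ : ∀ p ∈ φ.source, pdx φ p + μ p * pdy φ p = 0) (hf : DifferentiableOn ℝ f φ.source) :
    (∀ p ∈ φ.source, pdx f p + μ p * pdy f p = 0) ↔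
      ∃ g : ℂ → ℂ, DifferentiableOn ℂ g φ.target ∧ ∀ p ∈ φ.source, f p = g (φ p) := by
  constructor
  · intro hfμ
    refine ⟨f ∘ φ.symm, fun q hq => ?_, fun p hp => by simp [φ.left_inv hp]⟩
    have hp := φ.map_target hq
    obtain ⟨e, he⟩ := hφinv _ hp
    have hφe : HasFDerivAt φ (e : ℝ × ℝ →L[ℝ] ℂ) (φ.symm q) :=
      he ▸ (hφ.differentiableAt (φ.open_source.mem_nhds hp)).hasFDerivAt
    refine (differentiableAt_comp_of_pdx_add_mul_pdy_eq_zero (φ.hasFDerivAt_symm hq hφe)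
      (hf.differentiableAt (φ.open_source.mem_nhds hp)) (hfμ _ hp) ?_).differentiableWithinAt
    have hφμ' := hφμ _ hp
    rwa [pdx, pdy, ← he] at hφμ'
  · rintro ⟨g, hg, hfg⟩ p hp
    have hfg_near : f =ᶠ[nhds p] g ∘ φ :=
      Filter.eventually_of_mem (φ.open_source.mem_nhds hp) hfg
    rw [pdx, pdy, hfg_near.fderiv_eq, ← pdx, ← pdy,
      pdx_add_mul_pdy_comp (hg.differentiableAt (φ.open_target.mem_nhds (φ.map_source hp)))
        (hφ.differentiableAt (φ.open_source.mem_nhds hp)), hφμ p hp, mul_zero]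

section CanonicalCoordinate

variable {lam : ℝ × ℝ → ℂ} {p : ℝ × ℝ}

theorem contDiffOn_xiC {Ω : Set (ℝ × ℝ)} (hlam : ContDiffOn ℝ 1 lam Ω) :
    ContDiffOn ℝ 1 (xiC lam) Ω :=
  (ofRealCLM.contDiff.comp contDiff_snd).contDiffOn.sub
    (hlam.mul (ofRealCLM.contDiff.comp contDiff_fst).contDiffOn)

theorem fderiv_xiC_apply (hlam : DifferentiableAt ℝ lam p) (v : ℝ × ℝ) :
    fderiv ℝ (xiC lam) p v = v.2 - (lam p * v.1 + p.1 * fderiv ℝ lam p v) := by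
  have h : HasFDerivAt (xiC lam) _ p := (ofRealCLM.hasFDerivAt.comp p hasFDerivAt_snd).sub
    (hlam.hasFDerivAt.mul (ofRealCLM.hasFDerivAt.comp p hasFDerivAt_fst))
  simp [h.fderiv]

theorem pdx_xiC (hlam : DifferentiableAt ℝ lam p) :
    pdx (xiC lam) p = -lam p - p.1 * pdx lam p := by
  rw [pdx, fderiv_xiC_apply hlam, pdx]
  push_cast
  ring

theorem pdy_xiC (hlam : DifferentiableAt ℝ lam p) :
    pdy (xiC lam) p = 1 - p.1 * pdy lam p := by
  rw [pdy, fderiv_xiC_apply hlam, pdy]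
  push_cast
  ring

theorem pdx_xiC_add_mul_pdy_xiC (hlam : DifferentiableAt ℝ lam p)
    (hrigid : pdx lam p + lam p * pdy lam p = 0) :
    pdx (xiC lam) p + lam p * pdy (xiC lam) p = 0 := by
  rw [pdx_xiC hlam, pdy_xiC hlam]
  linear_combination (-(p.1 : ℂ)) * hrigid

theorem Phi_eq_mul_conj_pdy_xiC (hlam : DifferentiableAt ℝ lam p)
    (hrigid : pdx lam p + lam p * pdy lam p = 0) :
    Phi lam p = (lam p - starRingEnd ℂ (lam p)) * starRingEnd ℂ (pdy (xiC lam) p) := by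
  rw [pdy_xiC hlam, Phi, eq_neg_of_add_eq_zero_left hrigid]
  simp only [map_sub, map_mul, map_neg, map_one, conj_ofReal]
  ring

end CanonicalCoordinate

/-- General rigid holomorphic function, local form: near a point where
`Φ ≠ 0`, solutions of `f_x + λ f_y = 0` are exactly the functions `g ∘ ξ`
with `g` holomorphic on `ξ(V)`. -/
theorem stmt13
    (Ω : Set (ℝ × ℝ)) (hΩ : IsOpen Ω)
    (lam : ℝ × ℝ → ℂ)
    (hlam : ContDiffOn ℝ 1 lam Ω)
    (him : ∀ p ∈ Ω, 0 < (lam p).im)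
    (hrigid : ∀ p ∈ Ω, pdx lam p + lam p * pdy lam p = 0)
    (z₀ : ℝ × ℝ) (hz₀ : z₀ ∈ Ω) (hΦ : Phi lam z₀ ≠ 0) :
    ∃ V : Set (ℝ × ℝ), IsOpen V ∧ z₀ ∈ V ∧ V ⊆ Ω ∧
      IsOpen (xiC lam '' V) ∧
      ∀ f : ℝ × ℝ → ℂ, ContDiffOn ℝ 1 f V →
        ((∀ p ∈ V, pdx f p + lam p * pdy f p = 0) ↔
          (∃ g : ℂ → ℂ, DifferentiableOn ℂ g (xiC lam '' V) ∧
            ∀ p ∈ V, f p = g (xiC lam p))) := by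
  have hlamd : ∀ p ∈ Ω, DifferentiableAt ℝ lam p := fun p hp =>
    (hlam.differentiableOn one_ne_zero).differentiableAt (hΩ.mem_nhds hp)
  have hξ : ∀ p ∈ Ω, pdx (xiC lam) p + lam p * pdy (xiC lam) p = 0 := fun p hp =>
    pdx_xiC_add_mul_pdy_xiC (hlamd p hp) (hrigid p hp)
  have hξy : pdy (xiC lam) z₀ ≠ 0 := fun h => hΦ <| by
    rw [Phi_eq_mul_conj_pdy_xiC (hlamd z₀ hz₀) (hrigid z₀ hz₀), h, map_zero, mul_zero]
  have hξd : DifferentiableOn ℝ (xiC lam) Ω := (contDiffOn_xiC hlam).differentiableOn one_ne_zero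
  obtain ⟨φ, hφ, hz₀φ, hφΩ, hφinv⟩ :=
    (contDiffOn_xiC hlam).exists_openPartialHomeomorph_isInvertible_fderiv hΩ hz₀
      (isInvertible_of_apply_add_mul_apply_eq_zero (hξ z₀ hz₀) hξy (him z₀ hz₀).ne')
  rw [← hφ] at hξ hξd hφinv ⊢
  refine ⟨φ.source, φ.open_source, hz₀φ, hφΩ, φ.image_source_eq_target ▸ φ.open_target,
    fun f hf => ?_⟩
  rw [φ.image_source_eq_target]
  exact φ.pdx_add_mul_pdy_eq_zero_iff_exists_comp (hξd.mono hφΩ) hφinv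
    (fun p hp => hξ p (hφΩ hp)) (hf.differentiableOn one_ne_zero)
end
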